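/- arXiv:2005.13870 — 7 statements merged into one kernel-verified Lean document; each statement's English description precedes it below -/
import Mathlib

section
/- Let p be a prime with p ≡ 3 (mod 8). Then the equation x² - p·y² = -2 has a solution in positive integers x, y. -/
/-!
Let `(x, y)` be the fundamental solution of `x² - p y² = 1`. If `x` were odd, then `y = 2c` and
`((x - 1) / 2) * ((x + 1) / 2) = p c²` with coprime factors, so the factors are `u²` and `p v²`
in some order: one order gives a smaller solution of the Pell equation, the other
`u² - p v² = -1`, impossible modulo 8. Hence `x` is even, `(x - 1) (x + 1) = p y²` with coprime
factors, and since `u² - p v² = 2` is impossible modulo 8, `x - 1 = u²` and `x + 1 = p v²`.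
-/

theorem Int.exists_nonneg_sq_of_isCoprime {a b c : ℤ} (h : IsCoprime a b) (heq : a * b = c ^ 2)
    (ha : 0 ≤ a) : ∃ u, 0 ≤ u ∧ a = u ^ 2 := by
  obtain ⟨u, hu | hu⟩ := Int.sq_of_isCoprime h heq
  · exact ⟨|u|, abs_nonneg u, by rw [sq_abs, hu]⟩
  · exact ⟨0, le_rfl, by nlinarith [sq_nonneg u]⟩

theorem exists_sq_and_mul_sq_of_isCoprime {d m n b : ℤ} (hd : 0 < d) (hmn : IsCoprime m n)
    (heq : m * n = d * b ^ 2) (hdvd : d ∣ n) (hm : 0 ≤ m) (hn : 0 ≤ n) :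
    ∃ u v, 0 ≤ u ∧ 0 ≤ v ∧ m = u ^ 2 ∧ n = d * v ^ 2 := by
  obtain ⟨c, rfl⟩ := hdvd
  have hmc : m * c = b ^ 2 := mul_left_cancel₀ hd.ne' (by linear_combination heq)
  have hc : 0 ≤ c := nonneg_of_mul_nonneg_right hn hd
  have hmc' : IsCoprime m c := hmn.of_isCoprime_of_dvd_right (dvd_mul_left c d)
  obtain ⟨u, hu, rfl⟩ := Int.exists_nonneg_sq_of_isCoprime hmc' hmc hm
  obtain ⟨v, hv, rfl⟩ := Int.exists_nonneg_sq_of_isCoprime hmc'.symm (by rw [mul_comm, hmc]) hc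
  exact ⟨u, v, hu, hv, rfl, rfl⟩

theorem sq_sub_mul_sq_ne_of_emod_eight {d k : ℤ} (hd : d % 8 = 3)
    (hk : ∀ U V : ZMod 8, U ^ 2 - 3 * V ^ 2 ≠ k) (u v : ℤ) : u ^ 2 - d * v ^ 2 ≠ k := by
  intro h
  have hd' : (d : ZMod 8) = 3 := by simpa [hd] using (ZMod.intCast_mod d 8).symm
  apply hk u v
  rw [← hd']
  exact_mod_cast congrArg (Int.cast : ℤ → ZMod 8) h

namespace Pell.IsFundamental

variable {d : ℤ} {a : Solution₁ d}

theorem even_x (hd : Prime d) (hd8 : d % 8 = 3) (ha : IsFundamental a) : Even a.x := by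
  by_contra hodd
  obtain ⟨s, hs⟩ := Int.not_even_iff_odd.mp hodd
  have hs1 : 1 ≤ s := by linarith [ha.1]
  have hx := a.prop
  rw [hs] at hx
  obtain ⟨c, hc⟩ : Even a.y := by
    have hdy : Even (d * a.y ^ 2) := ⟨2 * s * (s + 1), by linear_combination -hx⟩
    rcases Int.even_mul.mp hdy with hev | hev
    · exact absurd (Int.even_iff.mp hev) (by omega)
    · exact (Int.even_pow.mp hev).1
  rw [hc] at hx
  have hprod : s * (s + 1) = d * c ^ 2 :=
    mul_left_cancel₀ (four_ne_zero (α := ℤ)) (by linear_combination hx)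
  have hco : IsCoprime s (s + 1) := ⟨-1, 1, by ring⟩
  rcases hd.dvd_mul.mp ⟨c ^ 2, hprod⟩ with h | h
  · obtain ⟨u, v, hu, -, hu2, hv2⟩ := exists_sq_and_mul_sq_of_isCoprime ha.d_pos hco.symm
      ((mul_comm _ _).trans hprod) h (by omega) (by omega)
    have hsol : u ^ 2 - d * v ^ 2 = 1 := by linarith
    have hxu := ha.x_le_x (a := Solution₁.mk u v hsol) (by rw [Solution₁.x_mk]; nlinarith)
    rw [Solution₁.x_mk, hs] at hxu
    nlinarith
  · obtain ⟨u, v, -, -, hu2, hv2⟩ := exists_sq_and_mul_sq_of_isCoprime ha.d_pos hco hprod h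
      (by omega) (by omega)
    exact sq_sub_mul_sq_ne_of_emod_eight hd8 (k := -1) (by decide) u v (by linarith)

theorem exists_sq_sub_mul_sq_eq_neg_two (hd : Prime d) (hd8 : d % 8 = 3)
    (ha : IsFundamental a) : ∃ u v : ℤ, 0 < u ∧ 0 < v ∧ u ^ 2 - d * v ^ 2 = -2 := by
  obtain ⟨k, hk⟩ := ha.even_x hd hd8
  have hk1 : 1 ≤ k := by linarith [ha.1]
  have hx := a.prop
  rw [hk] at hx
  have hprod : (2 * k - 1) * (2 * k + 1) = d * a.y ^ 2 := by linear_combination hx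
  have hco : IsCoprime (2 * k - 1) (2 * k + 1) := ⟨k, -(k - 1), by ring⟩
  rcases hd.dvd_mul.mp ⟨a.y ^ 2, hprod⟩ with h | h
  · obtain ⟨u, v, -, -, hu2, hv2⟩ := exists_sq_and_mul_sq_of_isCoprime ha.d_pos hco.symm
      ((mul_comm _ _).trans hprod) h (by omega) (by omega)
    exact absurd (by linarith) (sq_sub_mul_sq_ne_of_emod_eight hd8 (k := 2) (by decide) u v)
  · obtain ⟨u, v, hu, hv, hu2, hv2⟩ := exists_sq_and_mul_sq_of_isCoprime ha.d_pos hco hprod h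
      (by omega) (by omega)
    refine ⟨u, v, by nlinarith, hv.lt_of_ne ?_, by linarith⟩
    rintro rfl
    linarith

end Pell.IsFundamental

theorem stmt_0 (p : ℕ) (hp : p.Prime) (h8 : p % 8 = 3) :
    ∃ x y : ℤ, 0 < x ∧ 0 < y ∧ x ^ 2 - (p : ℤ) * y ^ 2 = -2 := by
  have hpZ : Prime (p : ℤ) := Nat.prime_iff_prime_int.mp hp
  obtain ⟨a, ha⟩ := Pell.IsFundamental.exists_of_not_isSquare (by exact_mod_cast hp.pos)
    hpZ.not_isSquare
  exact ha.exists_sq_sub_mul_sq_eq_neg_two hpZ (by omega)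
end

section
/- Let p, q be distinct primes with p ≡ 3 (mod 8) and q ≡ 1 (mod 8), and suppose p is not a quadratic residue modulo q. Then the equation x² - pq·y² = -2 has a solution in positive integers. -/
/-!
Take a solution t² − pq·u² = 1 of Pell's equation with u > 0, and descend on u. If t is even,
(t − 1)(t + 1) = pq·u²; if t is odd, u = 2w is even and k(k + 1) = pq·w² for t = 2k + 1. The two
factors are coprime, so each is a square times a divisor of pq. Since −1, 2 and q are non-residues
modulo p while −1, 2 are residues and p a non-residue modulo q, reducing modulo p or q excludes all
splittings but two: t − 1 = a², t + 1 = pq·b², which solves a² − pq·b² = −2, and k = pq·a²,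
k + 1 = b², a Pell solution (b, a) with a ≤ w < u.
-/

lemma isSquare_of_mul_sq_eq {K : Type*} [Field K] {m a c : K} (h : m * a ^ 2 = c) (hc0 : c ≠ 0)
    (hc : IsSquare c) : IsSquare m := by
  have ha : a ^ 2 ≠ 0 := by rintro ha; rw [ha, mul_zero] at h; exact hc0 h.symm
  rw [eq_div_of_mul_eq ha h]
  exact hc.div (IsSquare.sq a)

lemma Nat.Coprime.exists_sq_of_mul_eq_sq {A B c : ℕ} (hco : A.Coprime B) (h : A * B = c ^ 2) :
    ∃ a b, A = a ^ 2 ∧ B = b ^ 2 :=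
  let ⟨a, ha⟩ := exists_eq_pow_of_mul_eq_pow (Nat.isUnit_iff.mpr hco) h
  let ⟨b, hb⟩ := exists_eq_pow_of_mul_eq_pow (Nat.isUnit_iff.mpr hco.symm) (by rwa [mul_comm] at h)
  ⟨a, b, ha, hb⟩

lemma Nat.Coprime.split_of_mul_eq_prime_mul {p A B N : ℕ} (hp : p.Prime) (hco : A.Coprime B)
    (h : A * B = p * N) :
    (∃ A', A = p * A' ∧ A'.Coprime B ∧ A' * B = N) ∨
      ∃ B', B = p * B' ∧ A.Coprime B' ∧ A * B' = N := by
  rcases (Nat.Prime.dvd_mul hp).mp ⟨N, h⟩ with ⟨A', rfl⟩ | ⟨B', rfl⟩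
  · exact Or.inl ⟨A', rfl, hco.coprime_mul_left,
      Nat.eq_of_mul_eq_mul_left hp.pos (by rw [← h, mul_assoc])⟩
  · exact Or.inr ⟨B', rfl, hco.coprime_mul_left_right,
      Nat.eq_of_mul_eq_mul_left hp.pos (by rw [← h, mul_left_comm])⟩

lemma Nat.Coprime.cases_of_mul_eq_prime_mul_prime_mul_sq {p q A B u : ℕ} (hp : p.Prime)
    (hq : q.Prime) (hco : A.Coprime B) (h : A * B = p * q * u ^ 2) :
    (∃ a b, A = a ^ 2 ∧ B = p * q * b ^ 2) ∨ (∃ a b, A = p * q * a ^ 2 ∧ B = b ^ 2) ∨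
      (∃ a b, A = p * a ^ 2 ∧ B = q * b ^ 2) ∨ ∃ a b, A = q * a ^ 2 ∧ B = p * b ^ 2 := by
  rw [mul_assoc] at h
  rcases hco.split_of_mul_eq_prime_mul hp h with ⟨A, rfl, hco, h⟩ | ⟨B, rfl, hco, h⟩ <;>
  rcases hco.split_of_mul_eq_prime_mul hq h with ⟨A, rfl, hco, h⟩ | ⟨B, rfl, hco, h⟩ <;>
  obtain ⟨a, b, rfl, rfl⟩ := hco.exists_sq_of_mul_eq_sq h
  · exact Or.inr (Or.inl ⟨a, b, by ring, rfl⟩)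
  · exact Or.inr (Or.inr (Or.inl ⟨a, b, rfl, rfl⟩))
  · exact Or.inr (Or.inr (Or.inr ⟨a, b, rfl, rfl⟩))
  · exact Or.inl ⟨a, b, rfl, by ring⟩

lemma exists_pell_of_prime_mul_prime {p q : ℕ} (hp : p.Prime) (hq : q.Prime) (hpq : p ≠ q) :
    ∃ t u : ℕ, 0 < u ∧ t ^ 2 = p * q * u ^ 2 + 1 := by
  have hsq : ¬IsSquare (p * q) := by
    rintro ⟨r, hr⟩
    have hsf : Squarefree (p * q) := Nat.squarefree_mul_iff.mpr
      ⟨(Nat.coprime_primes hp hq).mpr hpq, hp.prime.squarefree, hq.prime.squarefree⟩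
    rw [Nat.isUnit_iff.mp (hsf r ⟨1, by rw [hr, mul_one]⟩), mul_one, mul_eq_one] at hr
    exact hp.one_lt.ne' hr.1
  obtain ⟨x, y, hxy, hy⟩ :=
    Pell.exists_of_not_isSquare (d := ((p * q : ℕ) : ℤ)) (by simp [hp.pos, hq.pos])
      (by rwa [Int.isSquare_natCast_iff])
  refine ⟨x.natAbs, y.natAbs, Int.natAbs_pos.mpr hy, ?_⟩
  zify
  rw [sq_abs, sq_abs]
  push_cast at hxy
  linarith

lemma exists_sq_add_two_of_mul_add_two {p q r w : ℕ} [hp : Fact p.Prime] [hq : Fact q.Prime]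
    (hq2 : q ≠ 2) (h2p : ¬IsSquare (2 : ZMod p)) (hpq : ¬IsSquare (p : ZMod q))
    (h2q : IsSquare (2 : ZMod q)) (hm1q : IsSquare (-1 : ZMod q)) (hr : Odd r)
    (h : r * (r + 2) = p * q * w ^ 2) :
    ∃ a b, 0 < a ∧ a ^ 2 + 2 = p * q * b ^ 2 := by
  have h2 : (2 : ZMod q) ≠ 0 := Ring.two_ne_zero (by rwa [ZMod.ringChar_zmod_n])
  have hco : r.Coprime (r + 2) := Nat.coprime_self_add_right.mpr (Nat.coprime_two_right.mpr hr)
  rcases hco.cases_of_mul_eq_prime_mul_prime_mul_sq hp.out hq.out h with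
    ⟨a, b, rfl, hb⟩ | ⟨a, b, rfl, hb⟩ | ⟨a, b, rfl, hb⟩ | ⟨a, b, rfl, hb⟩
  · refine ⟨a, b, Nat.pos_of_ne_zero ?_, hb⟩
    rintro rfl
    exact Nat.not_odd_zero hr
  · have hb := congrArg (Nat.cast : ℕ → ZMod p) hb
    push_cast [ZMod.natCast_self, zero_mul, zero_add] at hb
    exact absurd ⟨b, by rw [hb, sq]⟩ h2p
  · have ha := congrArg (Nat.cast : ℕ → ZMod q) hb
    push_cast [ZMod.natCast_self, zero_mul] at ha
    have hm2q : IsSquare (-2 : ZMod q) := by simpa using hm1q.mul h2q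
    exact absurd
      (isSquare_of_mul_sq_eq (eq_neg_of_add_eq_zero_left ha) (neg_ne_zero.mpr h2) hm2q) hpq
  · have hb := congrArg (Nat.cast : ℕ → ZMod q) hb
    push_cast [ZMod.natCast_self, zero_mul, zero_add] at hb
    exact absurd (isSquare_of_mul_sq_eq hb.symm h2 h2q) hpq

lemma exists_pell_le_of_mul_add_one {p q k w : ℕ} [hp : Fact p.Prime] [hq : Fact q.Prime]
    (hm1p : ¬IsSquare (-1 : ZMod p)) (hqp : ¬IsSquare (q : ZMod p)) (hpq : ¬IsSquare (p : ZMod q))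
    (hw : 0 < w) (h : k * (k + 1) = p * q * w ^ 2) :
    ∃ a b, 0 < a ∧ a ≤ w ∧ b ^ 2 = p * q * a ^ 2 + 1 := by
  have hco : k.Coprime (k + 1) := Nat.coprime_self_add_right.mpr (Nat.coprime_one_right k)
  rcases hco.cases_of_mul_eq_prime_mul_prime_mul_sq hp.out hq.out h with
    ⟨a, b, rfl, hb⟩ | ⟨a, b, rfl, hb⟩ | ⟨a, b, rfl, hb⟩ | ⟨a, b, rfl, hb⟩
  · have hb := congrArg (Nat.cast : ℕ → ZMod p) hb
    push_cast [ZMod.natCast_self, zero_mul] at hb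
    exact absurd ⟨a, by rw [← eq_neg_of_add_eq_zero_left hb, sq]⟩ hm1p
  · rw [hb] at h
    have hab : (a * b) ^ 2 = w ^ 2 :=
      Nat.eq_of_mul_eq_mul_left (Nat.mul_pos hp.out.pos hq.out.pos) (by rw [← h]; ring)
    replace hab : a * b = w := Nat.pow_left_injective two_ne_zero hab
    exact ⟨a, b, Nat.pos_of_mul_pos_right (hab ▸ hw), Nat.le_of_dvd hw ⟨b, hab.symm⟩, hb.symm⟩
  · have hb := congrArg (Nat.cast : ℕ → ZMod p) hb
    push_cast [ZMod.natCast_self, zero_mul, zero_add] at hb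
    exact absurd (isSquare_of_mul_sq_eq hb.symm one_ne_zero IsSquare.one) hqp
  · have hb := congrArg (Nat.cast : ℕ → ZMod q) hb
    push_cast [ZMod.natCast_self, zero_mul, zero_add] at hb
    exact absurd (isSquare_of_mul_sq_eq hb.symm one_ne_zero IsSquare.one) hpq

theorem exists_sq_add_two_of_pell {p q : ℕ} [hp : Fact p.Prime] [hq : Fact q.Prime]
    (hp2 : p ≠ 2) (hq2 : q ≠ 2) (h2p : ¬IsSquare (2 : ZMod p)) (hm1p : ¬IsSquare (-1 : ZMod p))
    (hqp : ¬IsSquare (q : ZMod p)) (hpq : ¬IsSquare (p : ZMod q)) (h2q : IsSquare (2 : ZMod q))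
    (hm1q : IsSquare (-1 : ZMod q)) (u t : ℕ) (hu : 0 < u) (ht : t ^ 2 = p * q * u ^ 2 + 1) :
    ∃ a b, 0 < a ∧ a ^ 2 + 2 = p * q * b ^ 2 := by
  induction u using Nat.strong_induction_on generalizing t with
  | _ u ih =>
  rcases t.even_or_odd with ht_even | ⟨k, rfl⟩
  · obtain ⟨r, rfl⟩ : ∃ r, t = r + 1 :=
      Nat.exists_eq_add_one.mpr (Nat.pos_of_ne_zero (by rintro rfl; simp at ht))
    have hr : Odd r := Nat.not_even_iff_odd.mp (Nat.even_add_one.mp ht_even)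
    have h : r * (r + 2) = p * q * u ^ 2 := by linear_combination ht
    exact exists_sq_add_two_of_mul_add_two hq2 h2p hpq h2q hm1q hr h
  · have hu_even : Even u := by
      have : Even (p * q * u ^ 2) := ⟨2 * k * (k + 1), by linear_combination ht.symm⟩
      simpa [Nat.even_mul, Nat.even_pow, Nat.not_even_iff_odd.mpr (hp.out.odd_of_ne_two hp2),
        Nat.not_even_iff_odd.mpr (hq.out.odd_of_ne_two hq2)] using this
    obtain ⟨w, rfl⟩ := hu_even
    have h : k * (k + 1) = p * q * w ^ 2 := by nlinarith
    obtain ⟨a, b, ha, haw, hab⟩ := exists_pell_le_of_mul_add_one hm1p hqp hpq (by omega) h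
    exact ih a (by omega) b ha hab

theorem stmt_3_general (p q : ℕ) (hp : p.Prime) (hq : q.Prime)
    (hp8 : p % 8 = 3) (hq8 : q % 8 = 1) (hleg : ¬ IsSquare ((p : ZMod q))) :
    ∃ x y : ℤ, 0 < x ∧ 0 < y ∧ x ^ 2 - (p : ℤ) * q * y ^ 2 = -2 := by
  have := Fact.mk hp
  have := Fact.mk hq
  have hp2 : p ≠ 2 := by omega
  have hq2 : q ≠ 2 := by omega
  have hqp : ¬IsSquare (q : ZMod p) :=
    (ZMod.exists_sq_eq_prime_iff_of_mod_four_eq_one (p := q) (q := p) (by omega) hp2).not.mp hleg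
  obtain ⟨t, u, hu, ht⟩ := exists_pell_of_prime_mul_prime hp hq (by omega)
  obtain ⟨a, b, ha, hab⟩ := exists_sq_add_two_of_pell hp2 hq2
    (by rw [ZMod.exists_sq_eq_two_iff hp2]; omega) (by rw [ZMod.exists_sq_eq_neg_one_iff]; omega)
    hqp hleg ((ZMod.exists_sq_eq_two_iff hq2).mpr (Or.inl hq8))
    (ZMod.exists_sq_eq_neg_one_iff.mpr (by omega)) u t hu ht
  have hb : 0 < b := Nat.pos_of_ne_zero (by rintro rfl; simp at hab)
  refine ⟨a, b, by exact_mod_cast ha, by exact_mod_cast hb, ?_⟩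
  have hab : ((a ^ 2 + 2 : ℕ) : ℤ) = ((p * q * b ^ 2 : ℕ) : ℤ) := congrArg _ hab
  push_cast at hab
  linarith

theorem stmt_3 (p q : ℕ) (hp : p.Prime) (hq : q.Prime) (hpq : p ≠ q)
    (hp8 : p % 8 = 3) (hq8 : q % 8 = 1) (hleg : ¬ IsSquare ((p : ZMod q))) :
    ∃ x y : ℤ, 0 < x ∧ 0 < y ∧ x ^ 2 - (p : ℤ) * q * y ^ 2 = -2 :=
  stmt_3_general p q hp hq hp8 hq8 hleg
end

section
/- Let p, q, r be distinct primes all congruent to 3 modulo 8 such that the Legendre symbols satisfy (p/q) = (q/r) = (r/p) = -1. Then the equation x² - pqr·y² = -2 has a solution in positive integers. -/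
private lemma leg_congr {s : ℕ} [Fact s.Prime] {a c : ℤ} (h : ((a : ZMod s)) = (c : ZMod s)) :
    legendreSym s a = legendreSym s c := by
  have h' : a % s = c % s := (ZMod.intCast_eq_intCast_iff' a c s).mp h
  rw [legendreSym.mod s a, legendreSym.mod s c, h']

private lemma leg_eq_of {s : ℕ} [Fact s.Prime] {e c t : ℤ}
    (h : ((e * t ^ 2 : ℤ) : ZMod s) = (c : ZMod s)) (ht : ((t : ZMod s)) ≠ 0) :
    legendreSym s e = legendreSym s c := by
  have h1 : legendreSym s (e * t ^ 2) = legendreSym s c := leg_congr h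
  rwa [legendreSym.mul, legendreSym.sq_one' (p := s) ht, mul_one] at h1

private lemma pull {d₁ d₂ n₁ n₂ m : ℤ} (hcop : IsCoprime n₁ n₂)
    (h : n₁ * n₂ = d₁ * d₂ * m ^ 2) (h₁ : d₁ ∣ n₁) (h₂ : d₂ ∣ n₂)
    (hn₁ : 0 < n₁) (hn₂ : 0 < n₂) (hd₁ : 0 < d₁) (hd₂ : 0 < d₂) :
    ∃ a b : ℤ, 0 ≤ a ∧ 0 ≤ b ∧ n₁ = d₁ * a ^ 2 ∧ n₂ = d₂ * b ^ 2 := by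
  obtain ⟨s, rfl⟩ := h₁
  obtain ⟨t, rfl⟩ := h₂
  have hs : 0 < s := by nlinarith
  have ht : 0 < t := by nlinarith
  have hst : s * t = m ^ 2 := by
    have h' : (d₁ * d₂) * (s * t) = (d₁ * d₂) * m ^ 2 := by linear_combination h
    exact mul_left_cancel₀ (by positivity) h'
  have hcst : IsCoprime s t :=
    (hcop.of_isCoprime_of_dvd_left (dvd_mul_left s d₁)).of_isCoprime_of_dvd_right
      (dvd_mul_left t d₂)
  obtain ⟨a, hA⟩ := Int.sq_of_isCoprime hcst hst
  obtain ⟨b, hB⟩ := Int.sq_of_isCoprime hcst.symm (by rw [mul_comm]; exact hst)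
  have hsa : s = a ^ 2 := by
    rcases hA with hA | hA
    · exact hA
    · exfalso; nlinarith [sq_nonneg a]
  have htb : t = b ^ 2 := by
    rcases hB with hB | hB
    · exact hB
    · exfalso; nlinarith [sq_nonneg b]
  exact ⟨|a|, |b|, abs_nonneg a, abs_nonneg b, by rw [sq_abs, ← hsa], by rw [sq_abs, ← htb]⟩

private lemma split8 (p q r : ℕ) (hp : p.Prime) (hq : q.Prime) (hr : r.Prime)
    (hpq : p ≠ q) (hqr : q ≠ r) (hrp : r ≠ p)
    {n₁ n₂ m : ℤ} (hn₁ : 0 < n₁) (hn₂ : 0 < n₂) (hcop : IsCoprime n₁ n₂)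
    (h : n₁ * n₂ = (p : ℤ) * q * r * m ^ 2) :
    ∃ a b : ℤ, 0 ≤ a ∧ 0 ≤ b ∧
      ((n₁ = a ^ 2 ∧ n₂ = (p:ℤ) * q * r * b ^ 2) ∨
       (n₁ = (p:ℤ) * a ^ 2 ∧ n₂ = (q:ℤ) * r * b ^ 2) ∨
       (n₁ = (q:ℤ) * a ^ 2 ∧ n₂ = (p:ℤ) * r * b ^ 2) ∨
       (n₁ = (r:ℤ) * a ^ 2 ∧ n₂ = (p:ℤ) * q * b ^ 2) ∨
       (n₁ = (p:ℤ) * q * a ^ 2 ∧ n₂ = (r:ℤ) * b ^ 2) ∨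
       (n₁ = (p:ℤ) * r * a ^ 2 ∧ n₂ = (q:ℤ) * b ^ 2) ∨
       (n₁ = (q:ℤ) * r * a ^ 2 ∧ n₂ = (p:ℤ) * b ^ 2) ∨
       (n₁ = (p:ℤ) * q * r * a ^ 2 ∧ n₂ = b ^ 2)) := by
  have hP : Prime (p:ℤ) := Nat.prime_iff_prime_int.mp hp
  have hQ : Prime (q:ℤ) := Nat.prime_iff_prime_int.mp hq
  have hR : Prime (r:ℤ) := Nat.prime_iff_prime_int.mp hr
  have cpq : IsCoprime (p:ℤ) (q:ℤ) := by
    rw [Int.isCoprime_iff_gcd_eq_one, Int.gcd_natCast_natCast]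
    exact (Nat.coprime_primes hp hq).mpr hpq
  have cpr : IsCoprime (p:ℤ) (r:ℤ) := by
    rw [Int.isCoprime_iff_gcd_eq_one, Int.gcd_natCast_natCast]
    exact (Nat.coprime_primes hp hr).mpr hrp.symm
  have cqr : IsCoprime (q:ℤ) (r:ℤ) := by
    rw [Int.isCoprime_iff_gcd_eq_one, Int.gcd_natCast_natCast]
    exact (Nat.coprime_primes hq hr).mpr hqr
  have hp0 : (0:ℤ) < p := by exact_mod_cast hp.pos
  have hq0 : (0:ℤ) < q := by exact_mod_cast hq.pos
  have hr0 : (0:ℤ) < r := by exact_mod_cast hr.pos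
  have hpd : (p:ℤ) ∣ n₁ ∨ (p:ℤ) ∣ n₂ :=
    hP.dvd_mul.mp (by rw [h]; exact ⟨(q:ℤ) * r * m ^ 2, by ring⟩)
  have hqd : (q:ℤ) ∣ n₁ ∨ (q:ℤ) ∣ n₂ :=
    hQ.dvd_mul.mp (by rw [h]; exact ⟨(p:ℤ) * r * m ^ 2, by ring⟩)
  have hrd : (r:ℤ) ∣ n₁ ∨ (r:ℤ) ∣ n₂ :=
    hR.dvd_mul.mp (by rw [h]; exact ⟨(p:ℤ) * q * m ^ 2, by ring⟩)
  rcases hpd with hp1 | hp2 <;> rcases hqd with hq1 | hq2 <;> rcases hrd with hr1 | hr2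
  · -- p q r ∣ n₁  : case (pqr, 1)
    obtain ⟨a, b, ha, hb, e1, e2⟩ := pull hcop
      (show n₁ * n₂ = ((p:ℤ) * q * r) * 1 * m ^ 2 by linear_combination h)
      ((cpr.mul_left cqr).mul_dvd (cpq.mul_dvd hp1 hq1) hr1) (one_dvd n₂)
      hn₁ hn₂ (by positivity) one_pos
    exact ⟨a, b, ha, hb, Or.inr (Or.inr (Or.inr (Or.inr (Or.inr (Or.inr (Or.inr
      ⟨e1, by rw [e2, one_mul]⟩))))))⟩
  · -- p q ∣ n₁, r ∣ n₂ : case (pq, r)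
    obtain ⟨a, b, ha, hb, e1, e2⟩ := pull hcop
      (show n₁ * n₂ = ((p:ℤ) * q) * r * m ^ 2 by linear_combination h)
      (cpq.mul_dvd hp1 hq1) hr2 hn₁ hn₂ (by positivity) hr0
    exact ⟨a, b, ha, hb, Or.inr (Or.inr (Or.inr (Or.inr (Or.inl ⟨e1, e2⟩))))⟩
  · -- p r ∣ n₁, q ∣ n₂ : case (pr, q)
    obtain ⟨a, b, ha, hb, e1, e2⟩ := pull hcop
      (show n₁ * n₂ = ((p:ℤ) * r) * q * m ^ 2 by linear_combination h)
      (cpr.mul_dvd hp1 hr1) hq2 hn₁ hn₂ (by positivity) hq0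
    exact ⟨a, b, ha, hb, Or.inr (Or.inr (Or.inr (Or.inr (Or.inr (Or.inl ⟨e1, e2⟩)))))⟩
  · -- p ∣ n₁, q r ∣ n₂ : case (p, qr)
    obtain ⟨a, b, ha, hb, e1, e2⟩ := pull hcop
      (show n₁ * n₂ = (p:ℤ) * ((q:ℤ) * r) * m ^ 2 by linear_combination h)
      hp1 (cqr.mul_dvd hq2 hr2) hn₁ hn₂ hp0 (by positivity)
    exact ⟨a, b, ha, hb, Or.inr (Or.inl ⟨e1, e2⟩)⟩
  · -- q r ∣ n₁, p ∣ n₂ : case (qr, p)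
    obtain ⟨a, b, ha, hb, e1, e2⟩ := pull hcop
      (show n₁ * n₂ = ((q:ℤ) * r) * p * m ^ 2 by linear_combination h)
      (cqr.mul_dvd hq1 hr1) hp2 hn₁ hn₂ (by positivity) hp0
    exact ⟨a, b, ha, hb, Or.inr (Or.inr (Or.inr (Or.inr (Or.inr (Or.inr (Or.inl ⟨e1, e2⟩))))))⟩
  · -- q ∣ n₁, p r ∣ n₂ : case (q, pr)
    obtain ⟨a, b, ha, hb, e1, e2⟩ := pull hcop
      (show n₁ * n₂ = (q:ℤ) * ((p:ℤ) * r) * m ^ 2 by linear_combination h)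
      hq1 (cpr.mul_dvd hp2 hr2) hn₁ hn₂ hq0 (by positivity)
    exact ⟨a, b, ha, hb, Or.inr (Or.inr (Or.inl ⟨e1, e2⟩))⟩
  · -- r ∣ n₁, p q ∣ n₂ : case (r, pq)
    obtain ⟨a, b, ha, hb, e1, e2⟩ := pull hcop
      (show n₁ * n₂ = (r:ℤ) * ((p:ℤ) * q) * m ^ 2 by linear_combination h)
      hr1 (cpq.mul_dvd hp2 hq2) hn₁ hn₂ hr0 (by positivity)
    exact ⟨a, b, ha, hb, Or.inr (Or.inr (Or.inr (Or.inl ⟨e1, e2⟩)))⟩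
  · -- p q r ∣ n₂ : case (1, pqr)
    obtain ⟨a, b, ha, hb, e1, e2⟩ := pull hcop
      (show n₁ * n₂ = 1 * ((p:ℤ) * q * r) * m ^ 2 by linear_combination h)
      (one_dvd n₁) ((cpr.mul_left cqr).mul_dvd (cpq.mul_dvd hp2 hq2) hr2)
      hn₁ hn₂ one_pos (by positivity)
    exact ⟨a, b, ha, hb, Or.inl ⟨by rw [e1, one_mul], e2⟩⟩

set_option maxHeartbeats 1000000 in
theorem stmt_4 (p q r : ℕ) (hp : p.Prime) (hq : q.Prime) (hr : r.Prime)
    (hpq : p ≠ q) (hqr : q ≠ r) (hrp : r ≠ p)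
    (hp8 : p % 8 = 3) (hq8 : q % 8 = 3) (hr8 : r % 8 = 3)
    (h1 : ¬ IsSquare ((p : ZMod q))) (h2 : ¬ IsSquare ((q : ZMod r)))
    (h3 : ¬ IsSquare ((r : ZMod p))) :
    ∃ x y : ℤ, 0 < x ∧ 0 < y ∧ x ^ 2 - (p : ℤ) * q * r * y ^ 2 = -2 := by
  haveI fpp : Fact p.Prime := ⟨hp⟩
  haveI fqq : Fact q.Prime := ⟨hq⟩
  haveI frr : Fact r.Prime := ⟨hr⟩
  have hp2 : p ≠ 2 := by omega
  have hq2 : q ≠ 2 := by omega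
  have hr2 : r ≠ 2 := by omega
  have hp4 : p % 4 = 3 := by omega
  have hq4 : q % 4 = 3 := by omega
  have hr4 : r % 4 = 3 := by omega
  have hPu : ¬ IsUnit ((p:ℤ)) := (Nat.prime_iff_prime_int.mp hp).not_unit
  have hQu : ¬ IsUnit ((q:ℤ)) := (Nat.prime_iff_prime_int.mp hq).not_unit
  have hRu : ¬ IsUnit ((r:ℤ)) := (Nat.prime_iff_prime_int.mp hr).not_unit
  -- Legendre symbol values
  have Lp2 : legendreSym p 2 = -1 := by
    rw [legendreSym.eq_neg_one_iff, show ((2:ℤ) : ZMod p) = (2 : ZMod p) by push_cast; ring,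
      ZMod.exists_sq_eq_two_iff hp2]
    omega
  have Lq2 : legendreSym q 2 = -1 := by
    rw [legendreSym.eq_neg_one_iff, show ((2:ℤ) : ZMod q) = (2 : ZMod q) by push_cast; ring,
      ZMod.exists_sq_eq_two_iff hq2]
    omega
  have Lr2 : legendreSym r 2 = -1 := by
    rw [legendreSym.eq_neg_one_iff, show ((2:ℤ) : ZMod r) = (2 : ZMod r) by push_cast; ring,
      ZMod.exists_sq_eq_two_iff hr2]
    omega
  have Lpm1 : legendreSym p (-1) = -1 := by
    rw [legendreSym.eq_neg_one_iff, show ((-1:ℤ) : ZMod p) = (-1 : ZMod p) by push_cast; ring,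
      ZMod.exists_sq_eq_neg_one_iff]
    omega
  have Lqm1 : legendreSym q (-1) = -1 := by
    rw [legendreSym.eq_neg_one_iff, show ((-1:ℤ) : ZMod q) = (-1 : ZMod q) by push_cast; ring,
      ZMod.exists_sq_eq_neg_one_iff]
    omega
  have Lrm1 : legendreSym r (-1) = -1 := by
    rw [legendreSym.eq_neg_one_iff, show ((-1:ℤ) : ZMod r) = (-1 : ZMod r) by push_cast; ring,
      ZMod.exists_sq_eq_neg_one_iff]
    omega
  have LPq : legendreSym q (p : ℕ) = -1 := (legendreSym.eq_neg_one_iff' q).mpr h1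
  have LQr : legendreSym r (q : ℕ) = -1 := (legendreSym.eq_neg_one_iff' r).mpr h2
  have LRp : legendreSym p (r : ℕ) = -1 := (legendreSym.eq_neg_one_iff' p).mpr h3
  have LQp : legendreSym p (q : ℕ) = 1 := by
    have hqr := legendreSym.quadratic_reciprocity_three_mod_four hp4 hq4
    rw [LPq] at hqr
    linarith
  have LRq : legendreSym q (r : ℕ) = 1 := by
    have hqr := legendreSym.quadratic_reciprocity_three_mod_four hq4 hr4
    rw [LQr] at hqr
    linarith
  have LPr : legendreSym r (p : ℕ) = 1 := by
    have hqr := legendreSym.quadratic_reciprocity_three_mod_four hr4 hp4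
    rw [LRp] at hqr
    linarith
  -- Pell setup
  have hDpos : (0:ℤ) < (p:ℤ) * q * r := by
    have := hp.pos; have := hq.pos; have := hr.pos; positivity
  have hDns : ¬ IsSquare ((p:ℤ) * q * r) := by
    intro hsq
    have h8p : ((p:ℕ) : ZMod 8) = 3 := by rw [← ZMod.natCast_mod, hp8]; decide
    have h8q : ((q:ℕ) : ZMod 8) = 3 := by rw [← ZMod.natCast_mod, hq8]; decide
    have h8r : ((r:ℕ) : ZMod 8) = 3 := by rw [← ZMod.natCast_mod, hr8]; decide
    have hmap : IsSquare ((((p:ℤ) * q * r : ℤ)) : ZMod 8) :=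
      hsq.map (Int.castRingHom (ZMod 8))
    push_cast at hmap
    rw [h8p, h8q, h8r] at hmap
    exact (by decide : ¬ IsSquare ((3 : ZMod 8) * 3 * 3)) hmap
  obtain ⟨sol, hsol⟩ := Pell.IsFundamental.exists_of_not_isSquare hDpos hDns
  have hx1 : 1 < sol.x := hsol.1
  have hprop := sol.prop
  rcases Int.even_or_odd sol.x with hxe | hxo
  · -- x even
    obtain ⟨z, hz⟩ := hxe
    have hcop : IsCoprime (sol.x + 1) (sol.x - 1) := ⟨1 - z, z, by rw [hz]; ring⟩
    have hprod : (sol.x + 1) * (sol.x - 1) = (p:ℤ) * q * r * sol.y ^ 2 := by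
      linear_combination hprop
    obtain ⟨a, b, ha, hb, hcase⟩ := split8 p q r hp hq hr hpq hqr hrp
      (by linarith) (by linarith) hcop hprod
    rcases hcase with ⟨e1, e2⟩ | ⟨e1, e2⟩ | ⟨e1, e2⟩ | ⟨e1, e2⟩ | ⟨e1, e2⟩ | ⟨e1, e2⟩ |
      ⟨e1, e2⟩ | ⟨e1, e2⟩
    · -- (1, pqr) : a² ≡ 2 mod p
      exfalso
      have hI : (1:ℤ) * a ^ 2 - (p:ℤ) * q * r * b ^ 2 = 2 := by linarith
      have haz : ((a : ZMod p)) ≠ 0 := by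
        rw [Ne, ZMod.intCast_zmod_eq_zero_iff_dvd]
        intro hd
        exact hPu (hcop.isUnit_of_dvd'
          (show (p:ℤ) ∣ sol.x + 1 by
            rw [e1]; exact hd.trans (dvd_pow_self a two_ne_zero))
          (show (p:ℤ) ∣ sol.x - 1 by
            rw [e2]; exact ((dvd_mul_right (p:ℤ) (q:ℤ)).mul_right (r:ℤ)).mul_right _))
      have hmod : (((1:ℤ) * a ^ 2 : ℤ) : ZMod p) = ((2:ℤ) : ZMod p) := by
        have hc : (((1:ℤ) * a ^ 2 - (p:ℤ) * q * r * b ^ 2 : ℤ) : ZMod p) = ((2:ℤ) : ZMod p) := by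
          rw [hI]
        push_cast at hc ⊢
        rw [ZMod.natCast_self p] at hc
        linear_combination hc
      have hleg := leg_eq_of hmod haz
      rw [legendreSym.at_one, Lp2] at hleg
      norm_num at hleg
    · -- (p, qr) : -qr b² ≡ 2 mod p
      exfalso
      have hI : (p:ℤ) * a ^ 2 - (q:ℤ) * r * b ^ 2 = 2 := by linarith
      have hbz : ((b : ZMod p)) ≠ 0 := by
        rw [Ne, ZMod.intCast_zmod_eq_zero_iff_dvd]
        intro hd
        exact hPu (hcop.isUnit_of_dvd'
          (show (p:ℤ) ∣ sol.x + 1 by rw [e1]; exact dvd_mul_right _ _)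
          (show (p:ℤ) ∣ sol.x - 1 by
            rw [e2]; exact (hd.trans (dvd_pow_self b two_ne_zero)).mul_left _))
      have hmod : (((-((q:ℤ) * r)) * b ^ 2 : ℤ) : ZMod p) = ((2:ℤ) : ZMod p) := by
        have hc : (((p:ℤ) * a ^ 2 - (q:ℤ) * r * b ^ 2 : ℤ) : ZMod p) = ((2:ℤ) : ZMod p) := by
          rw [hI]
        push_cast at hc ⊢
        rw [ZMod.natCast_self p] at hc
        linear_combination hc
      have hleg := leg_eq_of hmod hbz
      rw [show (-((q:ℤ) * r)) = (-1) * ((q:ℤ) * (r:ℤ)) by ring, legendreSym.mul,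
        legendreSym.mul, Lpm1, LQp, LRp, Lp2] at hleg
      norm_num at hleg
    · -- (q, pr) : -pr b² ≡ 2 mod q
      exfalso
      have hI : (q:ℤ) * a ^ 2 - (p:ℤ) * r * b ^ 2 = 2 := by linarith
      have hbz : ((b : ZMod q)) ≠ 0 := by
        rw [Ne, ZMod.intCast_zmod_eq_zero_iff_dvd]
        intro hd
        exact hQu (hcop.isUnit_of_dvd'
          (show (q:ℤ) ∣ sol.x + 1 by rw [e1]; exact dvd_mul_right _ _)
          (show (q:ℤ) ∣ sol.x - 1 by
            rw [e2]; exact (hd.trans (dvd_pow_self b two_ne_zero)).mul_left _))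
      have hmod : (((-((p:ℤ) * r)) * b ^ 2 : ℤ) : ZMod q) = ((2:ℤ) : ZMod q) := by
        have hc : (((q:ℤ) * a ^ 2 - (p:ℤ) * r * b ^ 2 : ℤ) : ZMod q) = ((2:ℤ) : ZMod q) := by
          rw [hI]
        push_cast at hc ⊢
        rw [ZMod.natCast_self q] at hc
        linear_combination hc
      have hleg := leg_eq_of hmod hbz
      rw [show (-((p:ℤ) * r)) = (-1) * ((p:ℤ) * (r:ℤ)) by ring, legendreSym.mul,
        legendreSym.mul, Lqm1, LPq, LRq, Lq2] at hleg
      norm_num at hleg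
    · -- (r, pq) : -pq b² ≡ 2 mod r
      exfalso
      have hI : (r:ℤ) * a ^ 2 - (p:ℤ) * q * b ^ 2 = 2 := by linarith
      have hbz : ((b : ZMod r)) ≠ 0 := by
        rw [Ne, ZMod.intCast_zmod_eq_zero_iff_dvd]
        intro hd
        exact hRu (hcop.isUnit_of_dvd'
          (show (r:ℤ) ∣ sol.x + 1 by rw [e1]; exact dvd_mul_right _ _)
          (show (r:ℤ) ∣ sol.x - 1 by
            rw [e2]; exact (hd.trans (dvd_pow_self b two_ne_zero)).mul_left _))
      have hmod : (((-((p:ℤ) * q)) * b ^ 2 : ℤ) : ZMod r) = ((2:ℤ) : ZMod r) := by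
        have hc : (((r:ℤ) * a ^ 2 - (p:ℤ) * q * b ^ 2 : ℤ) : ZMod r) = ((2:ℤ) : ZMod r) := by
          rw [hI]
        push_cast at hc ⊢
        rw [ZMod.natCast_self r] at hc
        linear_combination hc
      have hleg := leg_eq_of hmod hbz
      rw [show (-((p:ℤ) * q)) = (-1) * ((p:ℤ) * (q:ℤ)) by ring, legendreSym.mul,
        legendreSym.mul, Lrm1, LPr, LQr, Lr2] at hleg
      norm_num at hleg
    · -- (pq, r) : -r b² ≡ 2 mod p
      exfalso
      have hI : (p:ℤ) * q * a ^ 2 - (r:ℤ) * b ^ 2 = 2 := by linarith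
      have hbz : ((b : ZMod p)) ≠ 0 := by
        rw [Ne, ZMod.intCast_zmod_eq_zero_iff_dvd]
        intro hd
        exact hPu (hcop.isUnit_of_dvd'
          (show (p:ℤ) ∣ sol.x + 1 by
            rw [e1]; exact (dvd_mul_right (p:ℤ) (q:ℤ)).mul_right _)
          (show (p:ℤ) ∣ sol.x - 1 by
            rw [e2]; exact (hd.trans (dvd_pow_self b two_ne_zero)).mul_left _))
      have hmod : (((-(r:ℤ)) * b ^ 2 : ℤ) : ZMod p) = ((2:ℤ) : ZMod p) := by
        have hc : (((p:ℤ) * q * a ^ 2 - (r:ℤ) * b ^ 2 : ℤ) : ZMod p) = ((2:ℤ) : ZMod p) := by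
          rw [hI]
        push_cast at hc ⊢
        rw [ZMod.natCast_self p] at hc
        linear_combination hc
      have hleg := leg_eq_of hmod hbz
      rw [show (-(r:ℤ)) = (-1) * ((r:ℤ)) by ring, legendreSym.mul, Lpm1, LRp, Lp2] at hleg
      norm_num at hleg
    · -- (pr, q) : -q b² ≡ 2 mod r
      exfalso
      have hI : (p:ℤ) * r * a ^ 2 - (q:ℤ) * b ^ 2 = 2 := by linarith
      have hbz : ((b : ZMod r)) ≠ 0 := by
        rw [Ne, ZMod.intCast_zmod_eq_zero_iff_dvd]
        intro hd
        exact hRu (hcop.isUnit_of_dvd'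
          (show (r:ℤ) ∣ sol.x + 1 by
            rw [e1]; exact (dvd_mul_left (r:ℤ) (p:ℤ)).mul_right _)
          (show (r:ℤ) ∣ sol.x - 1 by
            rw [e2]; exact (hd.trans (dvd_pow_self b two_ne_zero)).mul_left _))
      have hmod : (((-(q:ℤ)) * b ^ 2 : ℤ) : ZMod r) = ((2:ℤ) : ZMod r) := by
        have hc : (((p:ℤ) * r * a ^ 2 - (q:ℤ) * b ^ 2 : ℤ) : ZMod r) = ((2:ℤ) : ZMod r) := by
          rw [hI]
        push_cast at hc ⊢
        rw [ZMod.natCast_self r] at hc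
        linear_combination hc
      have hleg := leg_eq_of hmod hbz
      rw [show (-(q:ℤ)) = (-1) * ((q:ℤ)) by ring, legendreSym.mul, Lrm1, LQr, Lr2] at hleg
      norm_num at hleg
    · -- (qr, p) : -p b² ≡ 2 mod q
      exfalso
      have hI : (q:ℤ) * r * a ^ 2 - (p:ℤ) * b ^ 2 = 2 := by linarith
      have hbz : ((b : ZMod q)) ≠ 0 := by
        rw [Ne, ZMod.intCast_zmod_eq_zero_iff_dvd]
        intro hd
        exact hQu (hcop.isUnit_of_dvd'
          (show (q:ℤ) ∣ sol.x + 1 by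
            rw [e1]; exact (dvd_mul_right (q:ℤ) (r:ℤ)).mul_right _)
          (show (q:ℤ) ∣ sol.x - 1 by
            rw [e2]; exact (hd.trans (dvd_pow_self b two_ne_zero)).mul_left _))
      have hmod : (((-(p:ℤ)) * b ^ 2 : ℤ) : ZMod q) = ((2:ℤ) : ZMod q) := by
        have hc : (((q:ℤ) * r * a ^ 2 - (p:ℤ) * b ^ 2 : ℤ) : ZMod q) = ((2:ℤ) : ZMod q) := by
          rw [hI]
        push_cast at hc ⊢
        rw [ZMod.natCast_self q] at hc
        linear_combination hc
      have hleg := leg_eq_of hmod hbz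
      rw [show (-(p:ℤ)) = (-1) * ((p:ℤ)) by ring, legendreSym.mul, Lqm1, LPq, Lq2] at hleg
      norm_num at hleg
    · -- (pqr, 1) : solution!
      refine ⟨b, a, ?_, ?_, by linarith⟩
      · rcases lt_or_eq_of_le hb with hblt | hbeq
        · exact hblt
        · exfalso; rw [← hbeq] at e2; norm_num at e2; linarith
      · rcases lt_or_eq_of_le ha with halt | haeq
        · exact halt
        · exfalso; rw [← haeq] at e1; norm_num at e1; linarith
  · -- x odd
    obtain ⟨k, hk⟩ := hxo
    have hk1 : 1 ≤ k := by omega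
    -- y is even
    rcases Int.even_or_odd sol.y with hye | hyo
    swap
    · exfalso
      obtain ⟨w, hw⟩ := hyo
      have key : ((p:ℤ) * q * r) = 4 * (k ^ 2 + k - (p:ℤ) * q * r * (w ^ 2 + w)) := by
        have hp' := sol.prop
        rw [hk, hw] at hp'
        linear_combination -hp'
      have h4 : (4:ℕ) ∣ p * q * r := by
        have : ((4:ℕ):ℤ) ∣ ((p * q * r : ℕ) : ℤ) := by
          push_cast
          exact ⟨_, key⟩
        exact_mod_cast this
      have hodd : (p * q * r) % 2 = 1 := by
        have op : Odd p := Nat.odd_iff.mpr (by omega)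
        have oq : Odd q := Nat.odd_iff.mpr (by omega)
        have orr : Odd r := Nat.odd_iff.mpr (by omega)
        exact Nat.odd_iff.mp ((op.mul oq).mul orr)
      omega
    obtain ⟨w, hw⟩ := hye
    have hprod : (k + 1) * k = (p:ℤ) * q * r * w ^ 2 := by
      have hp' := sol.prop
      rw [hk, hw] at hp'
      have h4 : (4:ℤ) * ((k + 1) * k) = 4 * ((p:ℤ) * q * r * w ^ 2) := by
        linear_combination hp'
      exact mul_left_cancel₀ (by norm_num) h4
    have hcop : IsCoprime (k + 1) k := ⟨1, -1, by ring⟩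
    obtain ⟨a, b, ha, hb, hcase⟩ := split8 p q r hp hq hr hpq hqr hrp
      (by linarith) (by linarith) hcop hprod
    rcases hcase with ⟨e1, e2⟩ | ⟨e1, e2⟩ | ⟨e1, e2⟩ | ⟨e1, e2⟩ | ⟨e1, e2⟩ | ⟨e1, e2⟩ |
      ⟨e1, e2⟩ | ⟨e1, e2⟩
    · -- (1, pqr) : descent, contradicts fundamentality
      exfalso
      have ha2 : 2 ≤ a := by nlinarith
      have hpf : a ^ 2 - (p:ℤ) * q * r * b ^ 2 = 1 := by linear_combination e2 - e1
      have hsmall : sol.x ≤ (Pell.Solution₁.mk a b hpf).x :=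
        hsol.2.2 (by rw [Pell.Solution₁.x_mk]; linarith)
      rw [Pell.Solution₁.x_mk, hk] at hsmall
      nlinarith
    · -- (p, qr) : p a² ≡ 1 mod q
      exfalso
      have hI : (p:ℤ) * a ^ 2 - (q:ℤ) * r * b ^ 2 = 1 := by linarith
      have haz : ((a : ZMod q)) ≠ 0 := by
        rw [Ne, ZMod.intCast_zmod_eq_zero_iff_dvd]
        intro hd
        exact hQu (hcop.isUnit_of_dvd'
          (show (q:ℤ) ∣ k + 1 by
            rw [e1]; exact (hd.trans (dvd_pow_self a two_ne_zero)).mul_left _)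
          (show (q:ℤ) ∣ k by rw [e2]; exact (dvd_mul_right (q:ℤ) (r:ℤ)).mul_right _))
      have hmod : ((((p:ℤ)) * a ^ 2 : ℤ) : ZMod q) = ((1:ℤ) : ZMod q) := by
        have hc : (((p:ℤ) * a ^ 2 - (q:ℤ) * r * b ^ 2 : ℤ) : ZMod q) = ((1:ℤ) : ZMod q) := by
          rw [hI]
        push_cast at hc ⊢
        rw [ZMod.natCast_self q] at hc
        linear_combination hc
      have hleg := leg_eq_of hmod haz
      rw [legendreSym.at_one, LPq] at hleg
      norm_num at hleg
    · -- (q, pr) : q a² ≡ 1 mod r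
      exfalso
      have hI : (q:ℤ) * a ^ 2 - (p:ℤ) * r * b ^ 2 = 1 := by linarith
      have haz : ((a : ZMod r)) ≠ 0 := by
        rw [Ne, ZMod.intCast_zmod_eq_zero_iff_dvd]
        intro hd
        exact hRu (hcop.isUnit_of_dvd'
          (show (r:ℤ) ∣ k + 1 by
            rw [e1]; exact (hd.trans (dvd_pow_self a two_ne_zero)).mul_left _)
          (show (r:ℤ) ∣ k by rw [e2]; exact (dvd_mul_left (r:ℤ) (p:ℤ)).mul_right _))
      have hmod : ((((q:ℤ)) * a ^ 2 : ℤ) : ZMod r) = ((1:ℤ) : ZMod r) := by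
        have hc : (((q:ℤ) * a ^ 2 - (p:ℤ) * r * b ^ 2 : ℤ) : ZMod r) = ((1:ℤ) : ZMod r) := by
          rw [hI]
        push_cast at hc ⊢
        rw [ZMod.natCast_self r] at hc
        linear_combination hc
      have hleg := leg_eq_of hmod haz
      rw [legendreSym.at_one, LQr] at hleg
      norm_num at hleg
    · -- (r, pq) : r a² ≡ 1 mod p
      exfalso
      have hI : (r:ℤ) * a ^ 2 - (p:ℤ) * q * b ^ 2 = 1 := by linarith
      have haz : ((a : ZMod p)) ≠ 0 := by
        rw [Ne, ZMod.intCast_zmod_eq_zero_iff_dvd]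
        intro hd
        exact hPu (hcop.isUnit_of_dvd'
          (show (p:ℤ) ∣ k + 1 by
            rw [e1]; exact (hd.trans (dvd_pow_self a two_ne_zero)).mul_left _)
          (show (p:ℤ) ∣ k by rw [e2]; exact (dvd_mul_right (p:ℤ) (q:ℤ)).mul_right _))
      have hmod : ((((r:ℤ)) * a ^ 2 : ℤ) : ZMod p) = ((1:ℤ) : ZMod p) := by
        have hc : (((r:ℤ) * a ^ 2 - (p:ℤ) * q * b ^ 2 : ℤ) : ZMod p) = ((1:ℤ) : ZMod p) := by
          rw [hI]
        push_cast at hc ⊢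
        rw [ZMod.natCast_self p] at hc
        linear_combination hc
      have hleg := leg_eq_of hmod haz
      rw [legendreSym.at_one, LRp] at hleg
      norm_num at hleg
    · -- (pq, r) : -r b² ≡ 1 mod q
      exfalso
      have hI : (p:ℤ) * q * a ^ 2 - (r:ℤ) * b ^ 2 = 1 := by linarith
      have hbz : ((b : ZMod q)) ≠ 0 := by
        rw [Ne, ZMod.intCast_zmod_eq_zero_iff_dvd]
        intro hd
        exact hQu (hcop.isUnit_of_dvd'
          (show (q:ℤ) ∣ k + 1 by
            rw [e1]; exact (dvd_mul_left (q:ℤ) (p:ℤ)).mul_right _)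
          (show (q:ℤ) ∣ k by
            rw [e2]; exact (hd.trans (dvd_pow_self b two_ne_zero)).mul_left _))
      have hmod : (((-(r:ℤ)) * b ^ 2 : ℤ) : ZMod q) = ((1:ℤ) : ZMod q) := by
        have hc : (((p:ℤ) * q * a ^ 2 - (r:ℤ) * b ^ 2 : ℤ) : ZMod q) = ((1:ℤ) : ZMod q) := by
          rw [hI]
        push_cast at hc ⊢
        rw [ZMod.natCast_self q] at hc
        linear_combination hc
      have hleg := leg_eq_of hmod hbz
      rw [legendreSym.at_one, show (-(r:ℤ)) = (-1) * ((r:ℤ)) by ring, legendreSym.mul,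
        Lqm1, LRq] at hleg
      norm_num at hleg
    · -- (pr, q) : -q b² ≡ 1 mod p
      exfalso
      have hI : (p:ℤ) * r * a ^ 2 - (q:ℤ) * b ^ 2 = 1 := by linarith
      have hbz : ((b : ZMod p)) ≠ 0 := by
        rw [Ne, ZMod.intCast_zmod_eq_zero_iff_dvd]
        intro hd
        exact hPu (hcop.isUnit_of_dvd'
          (show (p:ℤ) ∣ k + 1 by
            rw [e1]; exact (dvd_mul_right (p:ℤ) (r:ℤ)).mul_right _)
          (show (p:ℤ) ∣ k by
            rw [e2]; exact (hd.trans (dvd_pow_self b two_ne_zero)).mul_left _))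
      have hmod : (((-(q:ℤ)) * b ^ 2 : ℤ) : ZMod p) = ((1:ℤ) : ZMod p) := by
        have hc : (((p:ℤ) * r * a ^ 2 - (q:ℤ) * b ^ 2 : ℤ) : ZMod p) = ((1:ℤ) : ZMod p) := by
          rw [hI]
        push_cast at hc ⊢
        rw [ZMod.natCast_self p] at hc
        linear_combination hc
      have hleg := leg_eq_of hmod hbz
      rw [legendreSym.at_one, show (-(q:ℤ)) = (-1) * ((q:ℤ)) by ring, legendreSym.mul,
        Lpm1, LQp] at hleg
      norm_num at hleg
    · -- (qr, p) : -p b² ≡ 1 mod r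
      exfalso
      have hI : (q:ℤ) * r * a ^ 2 - (p:ℤ) * b ^ 2 = 1 := by linarith
      have hbz : ((b : ZMod r)) ≠ 0 := by
        rw [Ne, ZMod.intCast_zmod_eq_zero_iff_dvd]
        intro hd
        exact hRu (hcop.isUnit_of_dvd'
          (show (r:ℤ) ∣ k + 1 by
            rw [e1]; exact (dvd_mul_left (r:ℤ) (q:ℤ)).mul_right _)
          (show (r:ℤ) ∣ k by
            rw [e2]; exact (hd.trans (dvd_pow_self b two_ne_zero)).mul_left _))
      have hmod : (((-(p:ℤ)) * b ^ 2 : ℤ) : ZMod r) = ((1:ℤ) : ZMod r) := by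
        have hc : (((q:ℤ) * r * a ^ 2 - (p:ℤ) * b ^ 2 : ℤ) : ZMod r) = ((1:ℤ) : ZMod r) := by
          rw [hI]
        push_cast at hc ⊢
        rw [ZMod.natCast_self r] at hc
        linear_combination hc
      have hleg := leg_eq_of hmod hbz
      rw [legendreSym.at_one, show (-(p:ℤ)) = (-1) * ((p:ℤ)) by ring, legendreSym.mul,
        Lrm1, LPr] at hleg
      norm_num at hleg
    · -- (pqr, 1) : -b² ≡ 1 mod p
      exfalso
      have hI : (p:ℤ) * q * r * a ^ 2 - b ^ 2 = 1 := by linarith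
      have hbz : ((b : ZMod p)) ≠ 0 := by
        rw [Ne, ZMod.intCast_zmod_eq_zero_iff_dvd]
        intro hd
        exact hPu (hcop.isUnit_of_dvd'
          (show (p:ℤ) ∣ k + 1 by
            rw [e1]; exact ((dvd_mul_right (p:ℤ) (q:ℤ)).mul_right (r:ℤ)).mul_right _)
          (show (p:ℤ) ∣ k by
            rw [e2]; exact hd.trans (dvd_pow_self b two_ne_zero)))
      have hmod : (((-1 : ℤ) * b ^ 2 : ℤ) : ZMod p) = ((1:ℤ) : ZMod p) := by
        have hc : (((p:ℤ) * q * r * a ^ 2 - b ^ 2 : ℤ) : ZMod p) = ((1:ℤ) : ZMod p) := by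
          rw [hI]
        push_cast at hc ⊢
        rw [ZMod.natCast_self p] at hc
        linear_combination hc
      have hleg := leg_eq_of hmod hbz
      rw [legendreSym.at_one, Lpm1] at hleg
      norm_num at hleg
end

section
/- In any commutative ring R, if -1 is a sum of s squares in R with s even, then every element of R that is expressible as a difference u² - (v² + w²) with u, v, w ∈ R is a sum of at most s+1 squares in R. -/
private lemma aux_sq {R : Type*} [CommRing R] (v w : R) :
    ∀ m (ε : Fin (2*m) → R), ∃ δ : Fin (2*m) → R,
      (∑ i, ε i ^ 2) * (v ^ 2 + w ^ 2) = ∑ i, δ i ^ 2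
  | 0, ε => ⟨ε, by simp⟩
  | (m+1), ε => by
    obtain ⟨δ, hδ⟩ := aux_sq v w m (fun i => ε i.succ.succ)
    refine ⟨Fin.cons (ε 0 * v + ε (Fin.succ 0) * w) (Fin.cons (ε 0 * w - ε (Fin.succ 0) * v) δ), ?_⟩
    show (∑ i : Fin (2*m+1+1), ε i ^ 2) * (v ^ 2 + w ^ 2) = ∑ i : Fin (2*m+1+1), (Fin.cons (ε 0 * v + ε (Fin.succ 0) * w) (Fin.cons (ε 0 * w - ε (Fin.succ 0) * v) δ) : Fin (2*m+1+1) → R) i ^ 2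
    rw [Fin.sum_univ_succ, Fin.sum_univ_succ, Fin.sum_univ_succ, Fin.sum_univ_succ]
    simp only [Fin.cons_zero, Fin.cons_succ]
    linear_combination hδ

theorem stmt_9 (R : Type*) [CommRing R] (s : ℕ) (hs : Even s)
    (ε : Fin s → R) (hε : (-1 : R) = ∑ i, ε i ^ 2)
    (α u v w : R) (hα : α = u ^ 2 - (v ^ 2 + w ^ 2)) :
    ∃ γ : Fin (s + 1) → R, α = ∑ i, γ i ^ 2 := by
  obtain ⟨m, rfl⟩ := hs.two_dvd
  obtain ⟨δ, hδ⟩ := aux_sq v w m ε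
  refine ⟨Fin.cons u δ, ?_⟩
  rw [Fin.sum_univ_succ]
  simp only [Fin.cons_zero, Fin.cons_succ]
  rw [hα]
  linear_combination (v ^ 2 + w ^ 2) * hε + hδ
end

section
/- Let d > 1 be a nonsquare positive integer and let (x₀, y₀) be a solution of x² - d·y² = 1 in positive integers with y₀ minimal. If y₀ is even, then x₀ is odd and there exist positive integers a, b with ab = y₀/2, gcd((x₀+1)/2, (x₀-1)/2) = 1, and {(x₀+1)/2, (x₀-1)/2} = {d₁a², d₂b²} for some factorization d = d₁d₂ into coprime positive integers. -/
theorem stmt_15 (d : ℕ) (hd : 1 < d) (hds : ¬ IsSquare d)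
    (x₀ y₀ : ℕ) (hx : 0 < x₀) (hy : 0 < y₀)
    (hsol : (x₀ : ℤ) ^ 2 - (d : ℤ) * (y₀ : ℤ) ^ 2 = 1)
    (hmin : ∀ x y : ℕ, 0 < y → (x : ℤ) ^ 2 - (d : ℤ) * (y : ℤ) ^ 2 = 1 → y₀ ≤ y)
    (heven : 2 ∣ y₀) :
    Odd x₀ ∧
      ∃ a b d₁ d₂ : ℕ, 0 < a ∧ 0 < b ∧ a * b = y₀ / 2 ∧
        Nat.gcd ((x₀ + 1) / 2) ((x₀ - 1) / 2) = 1 ∧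
        d₁ * d₂ = d ∧ Nat.Coprime d₁ d₂ ∧
        (((x₀ + 1) / 2 = d₁ * a ^ 2 ∧ (x₀ - 1) / 2 = d₂ * b ^ 2) ∨
          ((x₀ + 1) / 2 = d₂ * b ^ 2 ∧ (x₀ - 1) / 2 = d₁ * a ^ 2)) := by
  -- move the equation to ℕ
  have key : x₀ ^ 2 = 1 + d * y₀ ^ 2 := by
    have : (x₀ : ℤ) ^ 2 = ((1 + d * y₀ ^ 2 : ℕ) : ℤ) := by push_cast; linarith
    exact_mod_cast this
  obtain ⟨m, hm⟩ := heven
  have hmpos : 0 < m := by omega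
  have key2 : x₀ ^ 2 = 1 + 4 * (d * m ^ 2) := by subst hm; ring_nf; ring_nf at key; omega
  have hodd : Odd x₀ := by
    have h2 : Odd (x₀ * x₀) := by
      rw [← pow_two, key2]; exact ⟨2 * (d * m ^ 2), by ring⟩
    exact (Nat.odd_mul.mp h2).1
  obtain ⟨c, hc⟩ := hodd
  -- u = c+1, v = c
  have hu : (x₀ + 1) / 2 = c + 1 := by omega
  have hv : (x₀ - 1) / 2 = c := by omega
  have hcpos : 0 < c := by nlinarith [hd, hmpos, key2]
  have hprod : (c + 1) * c = d * m ^ 2 := by nlinarith [key2, hc]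
  have hcop : Nat.Coprime (c + 1) c := by
    show Nat.gcd (c + 1) c = 1
    rw [Nat.gcd_self_add_left]; exact Nat.gcd_one_left c
  set d₁ := Nat.gcd d (c + 1) with hd₁
  set d₂ := Nat.gcd d c with hd₂
  set a := Nat.gcd m (c + 1) with ha
  set b := Nat.gcd m c with hb
  have hdd : d₁ * d₂ = d :=
    (Nat.gcd_mul_gcd_eq_iff_dvd_mul_of_coprime hcop).mpr ⟨m ^ 2, hprod⟩
  have hab : a * b = m :=
    (Nat.gcd_mul_gcd_eq_iff_dvd_mul_of_coprime hcop).mpr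
      ⟨d * m, by rw [hprod]; ring⟩
  -- s = d₁ a², t = d₂ b²
  have hst : (d₁ * a ^ 2) * (d₂ * b ^ 2) = (c + 1) * c := by
    rw [hprod]; rw [← hdd, ← hab]; ring
  have hsdvd3 : d₁ * a ^ 2 ∣ (c + 1) ^ 3 := by
    have h1 : d₁ ∣ c + 1 := Nat.gcd_dvd_right _ _
    have h2 : a ∣ c + 1 := Nat.gcd_dvd_right _ _
    calc d₁ * a ^ 2 ∣ (c + 1) * (c + 1) ^ 2 :=
          Nat.mul_dvd_mul h1 (pow_dvd_pow_of_dvd h2 2)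
      _ = (c + 1) ^ 3 := by ring
  have htdvd3 : d₂ * b ^ 2 ∣ c ^ 3 := by
    have h1 : d₂ ∣ c := Nat.gcd_dvd_right _ _
    have h2 : b ∣ c := Nat.gcd_dvd_right _ _
    calc d₂ * b ^ 2 ∣ c * c ^ 2 := Nat.mul_dvd_mul h1 (pow_dvd_pow_of_dvd h2 2)
      _ = c ^ 3 := by ring
  have hcop_sv : Nat.Coprime (d₁ * a ^ 2) c :=
    Nat.Coprime.coprime_dvd_left hsdvd3 (Nat.Coprime.pow_left 3 hcop)
  have hcop_ut : Nat.Coprime (c + 1) (d₂ * b ^ 2) :=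
    Nat.Coprime.coprime_dvd_right htdvd3 (Nat.Coprime.pow_right 3 hcop)
  have hs_eq : d₁ * a ^ 2 = c + 1 := by
    apply Nat.dvd_antisymm
    · exact hcop_sv.dvd_of_dvd_mul_right ⟨d₂ * b ^ 2, hst.symm⟩
    · exact hcop_ut.dvd_of_dvd_mul_right ⟨c, hst⟩
  have ht_eq : d₂ * b ^ 2 = c := by
    have hne : 0 < c + 1 := Nat.succ_pos c
    have := hst
    rw [hs_eq] at this
    exact Nat.eq_of_mul_eq_mul_left hne this
  refine ⟨⟨c, hc⟩, a, b, d₁, d₂, ?_, ?_, ?_, ?_, hdd, ?_, Or.inl ⟨by rw [hu, hs_eq], by rw [hv, ht_eq]⟩⟩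
  · exact Nat.pos_of_ne_zero fun h0 => by simp [h0] at hab; omega
  · exact Nat.pos_of_ne_zero fun h0 => by simp [h0] at hab; omega
  · omega
  · rw [hu, hv]; exact hcop
  · exact (Nat.Coprime.coprime_dvd_left (Nat.gcd_dvd_right d (c+1)) hcop).coprime_dvd_right (Nat.gcd_dvd_right d c)
end

section
/- Let p be a prime. If the Pell equation x² - p·y² = 1 has fundamental positive solution (x₀, y₀) with y₀ odd, then x₀ is even and either x₀+1 = a², x₀-1 = p·b² or x₀+1 = p·a², x₀-1 = b² for some positive integers a, b with ab = y₀. -/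
private lemma sq_helper {a b c : ℕ} (h : Nat.Coprime a b) (heq : a * b = c ^ 2) :
    ∃ d, a = d ^ 2 :=
  exists_eq_pow_of_mul_eq_pow (Nat.isUnit_iff.mpr h) heq

theorem stmt_16 (p : ℕ) (hp : p.Prime)
    (x₀ y₀ : ℕ) (hx : 0 < x₀) (hy : 0 < y₀)
    (hsol : (x₀ : ℤ) ^ 2 - (p : ℤ) * (y₀ : ℤ) ^ 2 = 1)
    (hmin : ∀ x y : ℕ, 0 < y → (x : ℤ) ^ 2 - (p : ℤ) * (y : ℤ) ^ 2 = 1 → y₀ ≤ y)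
    (hodd : Odd y₀) :
    Even x₀ ∧
      ∃ a b : ℕ, 0 < a ∧ 0 < b ∧ a * b = y₀ ∧
        ((x₀ + 1 = a ^ 2 ∧ x₀ - 1 = p * b ^ 2) ∨
          (x₀ + 1 = p * a ^ 2 ∧ x₀ - 1 = b ^ 2)) := by
  have hp2 : 2 ≤ p := hp.two_le
  have hnat : x₀ ^ 2 = 1 + p * y₀ ^ 2 := by
    have : (x₀ : ℤ) ^ 2 = 1 + (p : ℤ) * (y₀ : ℤ) ^ 2 := by linarith
    exact_mod_cast this
  have hx2 : 2 ≤ x₀ := by nlinarith [Nat.one_le_iff_ne_zero.mpr hy.ne']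
  have heq : (x₀ - 1) * (x₀ + 1) = p * y₀ ^ 2 := by
    zify [show 1 ≤ x₀ from hx]
    have hz : (x₀ : ℤ) ^ 2 = 1 + (p : ℤ) * (y₀ : ℤ) ^ 2 := by exact_mod_cast hnat
    linear_combination hz
  obtain ⟨j, hj⟩ := hodd
  obtain ⟨n, hn⟩ := Nat.even_mul_succ_self j
  have hy8 : y₀ ^ 2 = 8 * n + 1 := by subst hj; nlinarith [hn]
  have heven : Even x₀ := by
    by_contra hoddx
    obtain ⟨k, hk⟩ := Nat.not_even_iff_odd.mp hoddx
    obtain ⟨m, hm⟩ := Nat.even_mul_succ_self k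
    have hx8 : x₀ ^ 2 = 8 * m + 1 := by subst hk; nlinarith [hm]
    rw [hx8, hy8] at hnat
    have key : p * (8 * n + 1) = 8 * m := by omega
    have hoddp : Odd p := by
      rcases hp.eq_two_or_odd' with h | h
      · subst h; omega
      · exact h
    have : Odd (p * (8 * n + 1)) := hoddp.mul ⟨4 * n, by ring⟩
    rw [Nat.odd_iff] at this
    omega
  refine ⟨heven, ?_⟩
  have hcop : Nat.Coprime (x₀ - 1) (x₀ + 1) := by
    have h1 : Nat.gcd (x₀ - 1) (x₀ + 1) ∣ 2 := by
      have := Nat.dvd_sub (Nat.gcd_dvd_right (x₀ - 1) (x₀ + 1)) (Nat.gcd_dvd_left (x₀ - 1) (x₀ + 1))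
      simpa [show x₀ + 1 - (x₀ - 1) = 2 by omega] using this
    have hd : Nat.gcd (x₀ - 1) (x₀ + 1) ∣ x₀ - 1 := Nat.gcd_dvd_left _ _
    obtain ⟨k, hk⟩ := heven
    rcases (Nat.dvd_prime Nat.prime_two).mp h1 with h | h
    · exact h
    · exfalso
      rw [h] at hd
      obtain ⟨t, ht⟩ := hd
      omega
  have hpdvd : p ∣ (x₀ - 1) * (x₀ + 1) := heq ▸ Dvd.intro _ rfl
  rcases (Nat.Prime.dvd_mul hp).mp hpdvd with hcase | hcase
  · -- p ∣ x₀ - 1 : x₀ + 1 = a², x₀ - 1 = p b²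
    obtain ⟨m, hm⟩ := hcase
    have hm1 : m * (x₀ + 1) = y₀ ^ 2 := by
      have : p * (m * (x₀ + 1)) = p * y₀ ^ 2 := by rw [← heq, hm]; ring
      exact Nat.eq_of_mul_eq_mul_left (by omega) this
    have hcm : Nat.Coprime m (x₀ + 1) :=
      Nat.Coprime.coprime_dvd_left ⟨p, by rw [hm]; ring⟩ hcop
    obtain ⟨b, hb⟩ := sq_helper hcm hm1
    obtain ⟨a, ha⟩ := sq_helper (Nat.Coprime.symm hcm) (by rw [mul_comm]; exact hm1)
    have hab : a * b = y₀ := by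
      have h2 : (a * b) ^ 2 = y₀ ^ 2 := by rw [← hm1, ha, hb]; ring
      exact Nat.pow_left_injective (n := 2) (by norm_num) h2
    refine ⟨a, b, ?_, ?_, hab, Or.inl ⟨ha, ?_⟩⟩
    · rcases Nat.eq_zero_or_pos a with h | h
      · exfalso; subst h; simp at ha
      · exact h
    · rcases Nat.eq_zero_or_pos b with h | h
      · exfalso; subst h; simp at hb; subst hb; omega
      · exact h
    · rw [hm, hb]
  · -- p ∣ x₀ + 1 : x₀ + 1 = p a², x₀ - 1 = b²
    obtain ⟨m, hm⟩ := hcase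
    have hm1 : (x₀ - 1) * m = y₀ ^ 2 := by
      have : p * ((x₀ - 1) * m) = p * y₀ ^ 2 := by rw [← heq, hm]; ring
      exact Nat.eq_of_mul_eq_mul_left (by omega) this
    have hcm : Nat.Coprime (x₀ - 1) m :=
      Nat.Coprime.coprime_dvd_right ⟨p, by rw [hm]; ring⟩ hcop
    obtain ⟨b, hb⟩ := sq_helper hcm hm1
    obtain ⟨a, ha⟩ := sq_helper (Nat.Coprime.symm hcm) (by rw [mul_comm]; exact hm1)
    have hab : a * b = y₀ := by
      have h2 : (a * b) ^ 2 = y₀ ^ 2 := by rw [← hm1, ha, hb]; ring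
      exact Nat.pow_left_injective (n := 2) (by norm_num) h2
    refine ⟨a, b, ?_, ?_, hab, Or.inr ⟨?_, hb⟩⟩
    · rcases Nat.eq_zero_or_pos a with h | h
      · exfalso; subst h; simp at ha; subst ha; omega
      · exact h
    · rcases Nat.eq_zero_or_pos b with h | h
      · exfalso; subst h; simp at hb; omega
      · exact h
    · rw [hm, ha]
end

section
/- Let p, q be distinct primes with p ≡ 3 (mod 8), q ≡ 1 (mod 8) and (p/q) = -1. Then neither x² - pq·y² = -1, nor p·x² - q·y² = -1, nor q·x² - p·y² = -1 has a solution in integers. -/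
theorem stmt_17 (p q : ℕ) (hp : p.Prime) (hq : q.Prime) (hpq : p ≠ q)
    (hp8 : p % 8 = 3) (hq8 : q % 8 = 1) (hleg : ¬ IsSquare ((p : ZMod q))) :
    (¬ ∃ x y : ℤ, x ^ 2 - (p : ℤ) * q * y ^ 2 = -1) ∧
      (¬ ∃ x y : ℤ, (p : ℤ) * x ^ 2 - (q : ℤ) * y ^ 2 = -1) ∧
      (¬ ∃ x y : ℤ, (q : ℤ) * x ^ 2 - (p : ℤ) * y ^ 2 = -1) := by
  haveI : Fact p.Prime := ⟨hp⟩
  haveI : Fact q.Prime := ⟨hq⟩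
  have hq4 : (q : ℕ) % 4 ≠ 3 := by omega
  have hm1 : IsSquare (-1 : ZMod q) := ZMod.exists_sq_eq_neg_one_iff.mpr hq4
  obtain ⟨s, hs⟩ := hm1
  refine ⟨?_, ?_, ?_⟩
  · rintro ⟨x, y, h⟩
    have h1 : ((x : ZMod p)) ^ 2 = -1 := by
      have := congrArg (Int.cast : ℤ → ZMod p) h
      push_cast at this
      simpa [ZMod.natCast_self] using this
    have hsq : IsSquare (-1 : ZMod p) := ⟨x, by rw [← h1]; ring⟩
    rw [ZMod.exists_sq_eq_neg_one_iff] at hsq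
    omega
  · rintro ⟨x, y, h⟩
    have h1 : (p : ZMod q) * (x : ZMod q) ^ 2 = -1 := by
      have := congrArg (Int.cast : ℤ → ZMod q) h
      push_cast at this
      simpa [ZMod.natCast_self] using this
    have hx : (x : ZMod q) ≠ 0 := by
      rintro hx0
      rw [hx0] at h1
      simp at h1
    exact hleg ⟨s * (x : ZMod q)⁻¹, by
      field_simp
      linear_combination h1 + hs⟩
  · rintro ⟨x, y, h⟩
    have h1 : (p : ZMod q) * (y : ZMod q) ^ 2 = 1 := by
      have := congrArg (Int.cast : ℤ → ZMod q) h
      push_cast at this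
      simp [ZMod.natCast_self] at this
      exact this
    have hy : (y : ZMod q) ≠ 0 := by
      rintro hy0
      rw [hy0] at h1
      simp at h1
    exact hleg ⟨(y : ZMod q)⁻¹, by
      field_simp
      linear_combination h1⟩
end
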